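/- arXiv:2310.09727 — 4 statements merged into one kernel-verified Lean document; each statement's English description precedes it below -/
import Mathlib

section
/- Let r : Fin n → ℝ be a reward vector with r 1 > r 2 > ... > r n (strictly decreasing), let π : Fin n → ℝ be positive weights, and let α > 0. Then the weighted softmax average satisfies (∑ i, r i * π i * exp(α * r i)) / (∑ i, π i * exp(α * r i)) ≥ (r 1 * π 1 * exp(α * r 1) + ∑ i ≥ 2, r i * π i * exp(α * r 2)) / (π 1 * exp(α * r 1) + ∑ i ≥ 2, π i * exp(α * r 2)). That is, replacing every exponent exp(α * r i) for i ≥ 2 by the second-largest exponent exp(α * r 2) can only decrease the softmax-weighted average. -/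
/-- Replacing every exponent `exp (α * r i)` for `i ≥ 2` (i.e. all but the top index)
by the second-largest exponent `exp (α * r 1)` can only decrease the softmax-weighted
average of a strictly decreasing reward vector. -/
theorem softmax_replace_second_largest
    (n : ℕ) (r p : Fin (n + 2) → ℝ) (hr : StrictAnti r)
    (hp : ∀ i, 0 < p i) (α : ℝ) (hα : 0 < α) :
    (∑ i, r i * p i * Real.exp (α * r i)) / (∑ i, p i * Real.exp (α * r i)) ≥
      (r 0 * p 0 * Real.exp (α * r 0)
          + ∑ i ∈ Finset.univ \ {0}, r i * p i * Real.exp (α * r 1)) /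
        (p 0 * Real.exp (α * r 0)
          + ∑ i ∈ Finset.univ \ {0}, p i * Real.exp (α * r 1)) := by
  classical
  set a : Fin (n+2) → ℝ := fun i => p i * Real.exp (α * r i) with ha
  set b : Fin (n+2) → ℝ := fun i =>
    if i = 0 then p 0 * Real.exp (α * r 0) else p i * Real.exp (α * r 1) with hb
  have hapos : ∀ i, 0 < a i := fun i => mul_pos (hp i) (Real.exp_pos _)
  have hbpos : ∀ i, 0 < b i := by
    intro i
    by_cases h : i = 0
    · simp only [hb, if_pos h]; exact mul_pos (hp _) (Real.exp_pos _)
    · simp only [hb, if_neg h]; exact mul_pos (hp _) (Real.exp_pos _)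
  have hB : 0 < ∑ i, a i := Finset.sum_pos (fun i _ => hapos i) Finset.univ_nonempty
  have hD : 0 < ∑ i, b i := Finset.sum_pos (fun i _ => hbpos i) Finset.univ_nonempty
  -- rewrite the two sides in terms of a and b
  have hC : r 0 * p 0 * Real.exp (α * r 0)
      + ∑ i ∈ Finset.univ \ {0}, r i * p i * Real.exp (α * r 1) = ∑ i, r i * b i := by
    rw [Finset.sum_eq_add_sum_sdiff_singleton_of_mem (Finset.mem_univ (0 : Fin (n+2)))
      (fun i => r i * b i)]
    simp only [hb, if_pos rfl]
    congr 1
    · ring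
    · refine Finset.sum_congr rfl (fun i hi => ?_)
      have : i ≠ 0 := by simpa using (Finset.mem_sdiff.mp hi).2
      simp [this]; ring
  have hDeq : p 0 * Real.exp (α * r 0)
      + ∑ i ∈ Finset.univ \ {0}, p i * Real.exp (α * r 1) = ∑ i, b i := by
    rw [Finset.sum_eq_add_sum_sdiff_singleton_of_mem (Finset.mem_univ (0 : Fin (n+2))) b]
    simp only [hb, if_pos rfl]
    congr 1
    refine Finset.sum_congr rfl (fun i hi => ?_)
    have : i ≠ 0 := by simpa using (Finset.mem_sdiff.mp hi).2
    simp [this]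
  have hA : (∑ i, r i * p i * Real.exp (α * r i)) = ∑ i, r i * a i := by
    refine Finset.sum_congr rfl (fun i _ => ?_); simp [ha]; ring
  rw [hA, hC, hDeq, ge_iff_le, div_le_div_iff₀ hD hB]
  -- key termwise inequality
  have key : ∀ i j : Fin (n+2), 0 ≤ (r i - r j) * (a i * b j - a j * b i) := by
    have main : ∀ i j : Fin (n+2), i ≤ j → 0 ≤ (r i - r j) * (a i * b j - a j * b i) := by
      intro i j hij
      have hr' : r j ≤ r i := hr.antitone hij
      apply mul_nonneg (by linarith)
      rcases eq_or_lt_of_le hij with h | h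
      · simp [h]
      · have hj : j ≠ 0 := by
          rintro rfl
          exact absurd h (by simp)
        have hj1 : (1 : Fin (n+2)) ≤ j := by
          rw [Fin.le_def]
          have : (j : ℕ) ≠ 0 := fun h0 => hj (Fin.ext (by rw [h0]; simp))
          simp only [Fin.val_one]
          omega
        have hrj1 : r j ≤ r 1 := hr.antitone hj1
        have hexpj : Real.exp (α * r j) ≤ Real.exp (α * r 1) :=
          Real.exp_le_exp.mpr (by nlinarith)
        by_cases hi : i = 0
        · subst hi
          simp only [ha, hb, if_pos rfl, if_neg hj]
          have heq : p 0 * Real.exp (α * r 0) * (p j * Real.exp (α * r 1))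
              - p j * Real.exp (α * r j) * (p 0 * Real.exp (α * r 0))
              = (p 0 * Real.exp (α * r 0) * p j)
                * (Real.exp (α * r 1) - Real.exp (α * r j)) := by ring
          rw [heq]
          exact mul_nonneg
            (le_of_lt (mul_pos (mul_pos (hp 0) (Real.exp_pos _)) (hp j)))
            (by linarith)
        · have hexpij : Real.exp (α * r j) ≤ Real.exp (α * r i) :=
            Real.exp_le_exp.mpr (by nlinarith [hr h])
          simp only [ha, hb, if_neg hi, if_neg hj]
          have heq : p i * Real.exp (α * r i) * (p j * Real.exp (α * r 1))
              - p j * Real.exp (α * r j) * (p i * Real.exp (α * r 1))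
              = (p i * p j * Real.exp (α * r 1))
                * (Real.exp (α * r i) - Real.exp (α * r j)) := by ring
          rw [heq]
          exact mul_nonneg
            (le_of_lt (mul_pos (mul_pos (hp i) (hp j)) (Real.exp_pos _)))
            (by linarith)
    intro i j
    rcases le_total i j with h | h
    · exact main i j h
    · have h2 := main j i h
      have : (r i - r j) * (a i * b j - a j * b i)
          = (r j - r i) * (a j * b i - a i * b j) := by ring
      rw [this]; exact h2
  -- double-sum identity
  have e1 : (∑ i, r i * a i) * (∑ j, b j) = ∑ i, ∑ j, (r i * a i) * b j :=
    Finset.sum_mul_sum _ _ _ _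
  have e2 : (∑ i, r i * b i) * (∑ j, a j) = ∑ i, ∑ j, (r i * b i) * a j :=
    Finset.sum_mul_sum _ _ _ _
  have swap : (∑ i, ∑ j, ((r i * a i) * b j - (r i * b i) * a j))
      = ∑ i, ∑ j, ((r j * a j) * b i - (r j * b j) * a i) := Finset.sum_comm
  have expand : 2 * ((∑ i, r i * a i) * (∑ j, b j) - (∑ i, r i * b i) * (∑ j, a j))
      = ∑ i, ∑ j, (r i - r j) * (a i * b j - a j * b i) := by
    rw [e1, e2, ← Finset.sum_sub_distrib]
    simp only [← Finset.sum_sub_distrib]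
    rw [two_mul]
    nth_rewrite 2 [swap]
    rw [← Finset.sum_add_distrib]
    refine Finset.sum_congr rfl (fun i _ => ?_)
    rw [← Finset.sum_add_distrib]
    exact Finset.sum_congr rfl (fun j _ => by ring)
  have hnn : 0 ≤ ∑ i, ∑ j, (r i - r j) * (a i * b j - a j * b i) :=
    Finset.sum_nonneg fun i _ => Finset.sum_nonneg fun j _ => key i j
  nlinarith [expand, hnn]
end

section
/- Let r : Fin n → ℝ be a bounded reward (0 ≤ r i ≤ 1 for all i), π a probability distribution on Fin n, and let r_max = max_i r i be attained on a set P ⊆ Fin n, with second-best value r_q = max_{i ∉ P} r i and gap δ = r_max − r_q > 0. Let c = ∑_{i ∈ P} π i > 0. For α > 0, define the tilted distribution π_α(i) ∝ π(i)·exp(α·r i), and f(α) = ∑ i, (π_α(i) − π(i))·r i. Then f(α) ≥ f(∞)·(1 − 1/(c·(exp(α·δ) − 1) + 1)), where f(∞) = r_max − ∑ i, π(i)·r i is the limit of f(α) as α → ∞. -/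
open Finset

/-- Weighted Chebyshev sum inequality for antivarying pairs. -/
lemma cheb {ι : Type*} (s : Finset ι) (p g h : ι → ℝ)
    (hp : ∀ i ∈ s, 0 ≤ p i)
    (anti : ∀ i ∈ s, ∀ j ∈ s, (g i - g j) * (h i - h j) ≤ 0) :
    (∑ i ∈ s, p i) * (∑ i ∈ s, p i * (g i * h i)) ≤
      (∑ i ∈ s, p i * h i) * (∑ i ∈ s, p i * g i) := by
  have key : 0 ≤ ∑ i ∈ s, ∑ j ∈ s, p i * p j * ((g i - g j) * (h j - h i)) := by
    refine Finset.sum_nonneg fun i hi => Finset.sum_nonneg fun j hj => ?_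
    have h1 := anti i hi j hj
    have := mul_nonneg (hp i hi) (hp j hj)
    nlinarith [h1, this]
  have expand : ∑ i ∈ s, ∑ j ∈ s, p i * p j * ((g i - g j) * (h j - h i))
      = (∑ i ∈ s, p i * g i) * (∑ j ∈ s, p j * h j)
        + (∑ i ∈ s, p i * h i) * (∑ j ∈ s, p j * g j)
        - (∑ i ∈ s, p i) * (∑ j ∈ s, p j * (g j * h j))
        - (∑ i ∈ s, p i * (g i * h i)) * (∑ j ∈ s, p j) := by
    have : ∀ i ∈ s, ∑ j ∈ s, p i * p j * ((g i - g j) * (h j - h i))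
        = (p i * g i) * (∑ j ∈ s, p j * h j)
          - (p i * (g i * h i)) * (∑ j ∈ s, p j)
          - p i * (∑ j ∈ s, p j * (g j * h j))
          + (p i * h i) * (∑ j ∈ s, p j * g j) := by
      intro i _
      simp only [Finset.mul_sum]
      rw [← Finset.sum_sub_distrib, ← Finset.sum_sub_distrib, ← Finset.sum_add_distrib]
      exact Finset.sum_congr rfl fun j _ => by ring
    rw [Finset.sum_congr rfl this]
    simp only [Finset.sum_add_distrib, Finset.sum_sub_distrib, ← Finset.sum_mul]
    ring
  rw [expand] at key
  nlinarith [key]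

set_option maxHeartbeats 1000000 in
/-- Lower bound on the tilted-distribution gain `f(α)` in terms of the limit
`f(∞) = r_max − E_π[r]`, the mass `c` on the best actions and the suboptimality
gap `δ`. -/
theorem tilted_gain_lower_bound
    (n : ℕ) (hn : 2 ≤ n) (r p : Fin n → ℝ)
    (hr : ∀ i, 0 ≤ r i ∧ r i ≤ 1)
    (hppos : ∀ i, 0 < p i) (hpsum : ∑ i, p i = 1)
    (rmax : ℝ) (hrmax : IsGreatest (Set.range r) rmax)
    (P : Finset (Fin n)) (hP : ∀ i, i ∈ P ↔ r i = rmax)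
    (hPne : P.Nonempty) (hPproper : P ≠ Finset.univ)
    (rq : ℝ) (hrq : IsGreatest {x : ℝ | ∃ i ∉ P, r i = x} rq)
    (δ : ℝ) (hδ : δ = rmax - rq) (hδpos : 0 < δ)
    (c : ℝ) (hc : c = ∑ i ∈ P, p i) (hcpos : 0 < c)
    (α : ℝ) (hα : 0 < α) :
    ∑ i, (p i * Real.exp (α * r i) / (∑ j, p j * Real.exp (α * r j)) - p i) * r i ≥
      (rmax - ∑ i, p i * r i) * (1 - 1 / (c * (Real.exp (α * δ) - 1) + 1)) := by
  set Z : ℝ := ∑ j, p j * Real.exp (α * r j) with hZdef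
  have hrle : ∀ i, r i ≤ rmax := fun i => hrmax.2 ⟨i, rfl⟩
  have hrqle : ∀ i ∉ P, r i ≤ rq := fun i hi => hrq.2 ⟨i, hi, rfl⟩
  have hZpos : 0 < Z :=
    Finset.sum_pos (fun i _ => mul_pos (hppos i) (Real.exp_pos _)) ⟨hPne.choose, Finset.mem_univ _⟩
  set T : ℝ := ∑ i ∈ Pᶜ, p i * Real.exp (α * r i) with hTdef
  set S : ℝ := ∑ i ∈ Pᶜ, p i * Real.exp (α * r i) * (rmax - r i) with hSdef
  set F : ℝ := ∑ i ∈ Pᶜ, p i * (rmax - r i) with hFdef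
  set D : ℝ := c * (Real.exp (α * δ) - 1) + 1 with hDdef
  have hD1 : 1 < D := by
    have h0 : (0:ℝ) < α * δ := mul_pos hα hδpos
    have : Real.exp 0 < Real.exp (α * δ) := Real.exp_lt_exp.mpr h0
    rw [Real.exp_zero] at this
    nlinarith
  have hDpos : 0 < D := by linarith
  -- F equals rmax − E_π r
  have hFeq : rmax - ∑ i, p i * r i = F := by
    have : rmax - ∑ i, p i * r i = ∑ i, p i * (rmax - r i) := by
      simp_rw [mul_sub, Finset.sum_sub_distrib, ← Finset.sum_mul, hpsum, one_mul]
    rw [this, ← Finset.sum_add_sum_compl P]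
    have : ∑ i ∈ P, p i * (rmax - r i) = 0 :=
      Finset.sum_eq_zero fun i hi => by rw [(hP i).mp hi]; ring
    rw [this, zero_add]
  -- Z decomposition
  have hZsplit : Z = c * Real.exp (α * rmax) + T := by
    rw [hZdef, ← Finset.sum_add_sum_compl P, hc, Finset.sum_mul]
    congr 1
    exact Finset.sum_congr rfl fun i hi => by rw [(hP i).mp hi]
  have hTpos : 0 < T := by
    have hne : Pᶜ.Nonempty := by
      rwa [← Finset.compl_ne_univ_iff_nonempty, compl_compl]
    exact Finset.sum_pos (fun i _ => mul_pos (hppos i) (Real.exp_pos _)) hne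
  have hSnonneg : 0 ≤ S :=
    Finset.sum_nonneg fun i hi => mul_nonneg (mul_nonneg (hppos i).le (Real.exp_pos _).le)
      (by linarith [hrle i])
  have hFnonneg : 0 ≤ F :=
    Finset.sum_nonneg fun i hi => mul_nonneg (hppos i).le (by linarith [hrle i])
  -- LHS equals F - S/Z
  have hLHS : ∑ i, (p i * Real.exp (α * r i) / Z - p i) * r i = F - S / Z := by
    have h1 : ∑ i, (p i * Real.exp (α * r i) / Z - p i) * r i
        = (∑ i, p i * Real.exp (α * r i) * r i) / Z - ∑ i, p i * r i := by
      rw [Finset.sum_div, ← Finset.sum_sub_distrib]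
      exact Finset.sum_congr rfl fun i _ => by ring
    have h2 : ∑ i, p i * Real.exp (α * r i) * r i = rmax * Z - S := by
      have : ∀ i, p i * Real.exp (α * r i) * r i
          = rmax * (p i * Real.exp (α * r i)) - p i * Real.exp (α * r i) * (rmax - r i) := by
        intro i; ring
      rw [Finset.sum_congr rfl fun i _ => this i, Finset.sum_sub_distrib, ← Finset.mul_sum,
        ← hZdef]
      congr 1
      rw [← Finset.sum_add_sum_compl P, ← hSdef]
      have : ∑ i ∈ P, p i * Real.exp (α * r i) * (rmax - r i) = 0 :=
        Finset.sum_eq_zero fun i hi => by rw [(hP i).mp hi]; ring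
      rw [this, zero_add]
    rw [h1, h2, sub_div, mul_div_assoc, div_self hZpos.ne', mul_one, ← hFeq]
    ring
  rw [hLHS, ← hFeq, hFeq, ge_iff_le]
  -- reduce to S * D ≤ F * Z
  have key : S * D ≤ F * Z := by
    -- (a): exp(αδ) * S ≤ exp(α rmax) * F
    have ha : Real.exp (α * δ) * S ≤ Real.exp (α * rmax) * F := by
      rw [hSdef, hFdef, Finset.mul_sum, Finset.mul_sum]
      refine Finset.sum_le_sum fun i hi => ?_
      have hiP : i ∉ P := Finset.mem_compl.mp hi
      have h1 : α * δ + α * r i ≤ α * rmax := by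
        have := hrqle i hiP
        nlinarith
      have h2 : Real.exp (α * δ) * Real.exp (α * r i) ≤ Real.exp (α * rmax) := by
        rw [← Real.exp_add]; exact Real.exp_le_exp.mpr h1
      have h3 : 0 ≤ rmax - r i := by linarith [hrle i]
      have h4 : 0 ≤ p i := (hppos i).le
      nlinarith [mul_le_mul_of_nonneg_right h2 (mul_nonneg h4 h3)]
    -- (b): (1-c) * S ≤ F * T, via Chebyshev
    have hb : (1 - c) * S ≤ F * T := by
      have hcomp : 1 - c = ∑ i ∈ Pᶜ, p i := by
        have h := Finset.sum_add_sum_compl P p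
        rw [hpsum] at h
        rw [hc]; linarith
      have anti : ∀ i ∈ Pᶜ, ∀ j ∈ Pᶜ,
          ((fun i => Real.exp (α * r i)) i - (fun i => Real.exp (α * r i)) j) *
            ((fun i => rmax - r i) i - (fun i => rmax - r i) j) ≤ 0 := by
        intro i _ j _
        simp only
        rcases le_total (r i) (r j) with hij | hij
        · have hex : Real.exp (α * r i) ≤ Real.exp (α * r j) :=
            Real.exp_le_exp.mpr (mul_le_mul_of_nonneg_left hij hα.le)
          exact mul_nonpos_iff.mpr (Or.inr ⟨by linarith, by linarith⟩)
        · have hex : Real.exp (α * r j) ≤ Real.exp (α * r i) :=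
            Real.exp_le_exp.mpr (mul_le_mul_of_nonneg_left hij hα.le)
          exact mul_nonpos_iff.mpr (Or.inl ⟨by linarith, by linarith⟩)
      have hch := cheb Pᶜ p (fun i => Real.exp (α * r i)) (fun i => rmax - r i)
        (fun i _ => (hppos i).le) anti
      have e1 : ∑ i ∈ Pᶜ, p i * (Real.exp (α * r i) * (rmax - r i)) = S :=
        Finset.sum_congr rfl fun i _ => by ring
      rw [e1, ← hcomp] at hch
      exact hch
    calc S * D = c * (Real.exp (α * δ) * S) + (1 - c) * S := by rw [hDdef]; ring
      _ ≤ c * (Real.exp (α * rmax) * F) + F * T := by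
          have := mul_le_mul_of_nonneg_left ha hcpos.le
          linarith
      _ = F * Z := by rw [hZsplit]; ring
  have hSZ : S / Z ≤ F / D := by
    rw [div_le_div_iff₀ hZpos hDpos]; linarith [key]
  have : F * (1 - 1 / D) = F - F / D := by ring
  rw [this]
  linarith [hSZ]
end

section
/- With the same setup (tilted distributions π_α(i) ∝ π(i)·exp(α·r i) and f(α) = ∑ i (π_α(i) − π(i))·r i), the limit as α → ∞ of f(α) equals max_i r i − ∑ i π(i)·r i, provided π i > 0 for all i. -/
open Filter Real Finset

/-- The limit as `α → ∞` of the tilted-distribution gain `f(α)` equals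
`max_i r i − ∑ i, π i * r i`, provided all `π i > 0`. -/
theorem tilted_gain_tendsto_max_sub_mean
    (n : ℕ) (r p : Fin (n + 1) → ℝ)
    (hppos : ∀ i, 0 < p i) (hpsum : ∑ i, p i = 1) :
    Filter.Tendsto
      (fun α : ℝ =>
        ∑ i, (p i * Real.exp (α * r i) / (∑ j, p j * Real.exp (α * r j)) - p i) * r i)
      Filter.atTop
      (nhds ((Finset.univ.sup' Finset.univ_nonempty r) - ∑ i, p i * r i)) := by
  set M := Finset.univ.sup' Finset.univ_nonempty r with hM
  set g : ℝ → ℝ := fun α => ∑ i, p i * Real.exp (α * (r i - M)) with hg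
  set h : ℝ → ℝ := fun α => ∑ i, p i * Real.exp (α * (r i - M)) * r i with hh
  set S : ℝ := ∑ i, (if r i = M then p i else 0) with hS
  have hle : ∀ i, r i ≤ M := fun i => Finset.le_sup' r (Finset.mem_univ i)
  obtain ⟨i0, -, hi0⟩ := Finset.exists_mem_eq_sup' Finset.univ_nonempty r
  have hSpos : 0 < S := by
    rw [hS]
    have hri0 : r i0 = M := by rw [hM, hi0]
    refine Finset.sum_pos' (fun i _ => ?_) ⟨i0, Finset.mem_univ i0, ?_⟩
    · split
      · exact (hppos i).le
      · exact le_refl 0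
    · rw [if_pos hri0]; exact hppos i0
  have hterm : ∀ i, Tendsto (fun α : ℝ => p i * Real.exp (α * (r i - M))) atTop
      (nhds (if r i = M then p i else 0)) := by
    intro i
    by_cases hi : r i = M
    · simp [hi]
    · rw [if_neg hi]
      have hc : r i - M < 0 := sub_neg.mpr (lt_of_le_of_ne (hle i) hi)
      have h1 : Tendsto (fun α : ℝ => α * (r i - M)) atTop atBot :=
        tendsto_id.atTop_mul_const_of_neg hc
      have h2 := (Real.tendsto_exp_atBot.comp h1).const_mul (p i)
      simpa using h2
  have hgt : Tendsto g atTop (nhds S) := by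
    rw [hS]; exact tendsto_finset_sum _ fun i _ => hterm i
  have hht : Tendsto h atTop (nhds (M * S)) := by
    have hMS : M * S = ∑ i, (if r i = M then p i else 0) * r i := by
      rw [hS, Finset.mul_sum]
      apply Finset.sum_congr rfl
      intro i _
      by_cases hi : r i = M <;> simp [hi] <;> ring
    rw [hMS]
    exact tendsto_finset_sum _ fun i _ => (hterm i).mul_const (r i)
  have key : Tendsto (fun α => h α / g α - ∑ i, p i * r i) atTop
      (nhds (M - ∑ i, p i * r i)) := by
    have := (hht.div hgt hSpos.ne').sub_const (∑ i, p i * r i)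
    rwa [mul_div_assoc, div_self hSpos.ne', mul_one] at this
  refine key.congr fun α => (Eq.symm ?_)
  have hexp : ∀ j, p j * Real.exp (α * r j)
      = Real.exp (α * M) * (p j * Real.exp (α * (r j - M))) := by
    intro j
    rw [mul_comm (Real.exp (α * M)), mul_assoc, ← Real.exp_add]
    ring_nf
  have hD : (∑ j, p j * Real.exp (α * r j)) = Real.exp (α * M) * g α := by
    rw [hg, Finset.mul_sum]
    exact Finset.sum_congr rfl fun j _ => hexp j
  have hN : (∑ i, p i * Real.exp (α * r i) * r i) = Real.exp (α * M) * h α := by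
    rw [hh, Finset.mul_sum]
    apply Finset.sum_congr rfl
    intro i _
    rw [hexp i]; ring
  calc (∑ i, (p i * Real.exp (α * r i) / (∑ j, p j * Real.exp (α * r j)) - p i) * r i)
      = ∑ i, (p i * Real.exp (α * r i) * r i / (∑ j, p j * Real.exp (α * r j))
          - p i * r i) := by
        apply Finset.sum_congr rfl; intro i _; ring
    _ = (∑ i, p i * Real.exp (α * r i) * r i) / (∑ j, p j * Real.exp (α * r j))
          - ∑ i, p i * r i := by
        rw [Finset.sum_sub_distrib, Finset.sum_div]
    _ = h α / g α - ∑ i, p i * r i := by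
        rw [hN, hD, mul_div_mul_left _ _ (Real.exp_ne_zero _)]
end

section
/- (Vanishing advantage of the non-potential part in MPGs.) Let M be a Markov potential game with potential value function Φ^π(s), and define h_i(s,a) = r_i(s,a) − φ(s,a), so V_i^π(s) = Φ^π(s) + V_{h_i}^π(s). Let Ā_{h_i}^π(s, a_i) = ∑_{a_{-i}} π_{-i}(a_{-i}|s)·A_{h_i}^π(s, a_i, a_{-i}) be the marginalized advantage of agent i with respect to h_i. Then for every state s, every agent i, and every pair of local policies π'_i, π_i, we have ∑_{a_i} (π'_i(a_i|s) − π_i(a_i|s))·Ā_{h_i}^π(s, a_i) = 0. -/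
open scoped BigOperators
open Finset
set_option linter.unusedSectionVars false


/-- One-step distribution update: push a state distribution `μ` through joint policy
`p` and transition kernel `P`. -/
noncomputable def stepDist {S : Type} [Fintype S] {A : Type} [Fintype A]
    (P : S → A → S → ℝ) (p : S → A → ℝ) (μ : S → ℝ) : S → ℝ :=
  fun s' => ∑ s, ∑ a, μ s * p s a * P s a s'

/-- Discounted value function `V^p_{rw}(s0)` of a joint policy `p` for reward `rw`:
the discounted sum over time of expected rewards along the induced state
distributions. -/
noncomputable def valueFn {S : Type} [Fintype S] [DecidableEq S] {A : Type} [Fintype A]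
    (γ : ℝ) (P : S → A → S → ℝ) (rw : S → A → ℝ) (p : S → A → ℝ) (s0 : S) : ℝ :=
  ∑' t : ℕ, γ ^ t *
    ∑ s, ∑ a,
      ((stepDist P p)^[t] (fun s => if s = s0 then (1 : ℝ) else 0)) s * p s a * rw s a

/-- State-action value function `Q^p_{rw}(s, a)`. -/
noncomputable def qFn {S : Type} [Fintype S] [DecidableEq S] {A : Type} [Fintype A]
    (γ : ℝ) (P : S → A → S → ℝ) (rw : S → A → ℝ) (p : S → A → ℝ) (s : S) (a : A) : ℝ :=
  rw s a + γ * ∑ s', P s a s' * valueFn γ P rw p s'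

/-- Joint (product) policy induced by local policies. -/
noncomputable def jointPol {S : Type} {n : ℕ} {Ω : Fin n → Type} [∀ i, Fintype (Ω i)]
    (π : ∀ i, S → Ω i → ℝ) : S → (∀ i, Ω i) → ℝ :=
  fun s a => ∏ i, π i s (a i)

section helpers

variable {S : Type} [Fintype S] [DecidableEq S] [Nonempty S] {A : Type} [Fintype A]
variable (P : S → A → S → ℝ) (p : S → A → ℝ) (rw : S → A → ℝ) (γ : ℝ)

lemma stepDist_apply (μ : S → ℝ) (s' : S) :
    stepDist P p μ s' = ∑ s, ∑ a, μ s * p s a * P s a s' := rfl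

def delta (s0 : S) : S → ℝ := fun s => if s = s0 then (1 : ℝ) else 0

lemma stepDist_prob (hP : ∀ s a, (∀ s', 0 ≤ P s a s') ∧ ∑ s', P s a s' = 1)
    (hp : ∀ s, (∀ a, 0 ≤ p s a) ∧ ∑ a, p s a = 1)
    {μ : S → ℝ} (h0 : ∀ s, 0 ≤ μ s) (h1 : ∑ s, μ s = 1) :
    (∀ s', 0 ≤ stepDist P p μ s') ∧ ∑ s', stepDist P p μ s' = 1 := by
  constructor
  · intro s'
    apply Finset.sum_nonneg; intro s _
    apply Finset.sum_nonneg; intro a _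
    exact mul_nonneg (mul_nonneg (h0 s) ((hp s).1 a)) ((hP s a).1 s')
  · unfold stepDist
    rw [Finset.sum_comm]
    have key : ∀ s, ∑ s', ∑ a, μ s * p s a * P s a s' = μ s := by
      intro s
      rw [Finset.sum_comm]
      have h2 : ∀ a, ∑ s', μ s * p s a * P s a s' = μ s * p s a := by
        intro a; rw [← Finset.mul_sum, (hP s a).2, mul_one]
      simp_rw [h2]
      rw [← Finset.mul_sum, (hp s).2, mul_one]
    simp_rw [key]
    exact h1

lemma iter_prob (hP : ∀ s a, (∀ s', 0 ≤ P s a s') ∧ ∑ s', P s a s' = 1)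
    (hp : ∀ s, (∀ a, 0 ≤ p s a) ∧ ∑ a, p s a = 1)
    {μ : S → ℝ} (h0 : ∀ s, 0 ≤ μ s) (h1 : ∑ s, μ s = 1) (t : ℕ) :
    (∀ s, 0 ≤ (stepDist P p)^[t] μ s) ∧ ∑ s, (stepDist P p)^[t] μ s = 1 := by
  induction t with
  | zero => exact ⟨h0, h1⟩
  | succ t ih =>
    rw [Function.iterate_succ_apply']
    exact stepDist_prob P p hP hp ih.1 ih.2

lemma delta_prob (s0 : S) : (∀ s, 0 ≤ delta s0 s) ∧ ∑ s, delta s0 s = 1 := by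
  constructor
  · intro s; unfold delta; split <;> norm_num
  · simp [delta]

lemma iter_linear (t : ℕ) (μ : S → ℝ) (s0 : S) :
    (stepDist P p)^[t] μ s0 = ∑ s', μ s' * (stepDist P p)^[t] (delta s') s0 := by
  induction t generalizing s0 with
  | zero => simp [delta, mul_ite]
  | succ t ih =>
    simp only [Function.iterate_succ_apply']
    show stepDist P p ((stepDist P p)^[t] μ) s0
        = ∑ s', μ s' * stepDist P p ((stepDist P p)^[t] (delta s')) s0
    simp_rw [stepDist_apply, ih, Finset.sum_mul, Finset.mul_sum]
    conv_rhs => rw [Finset.sum_comm]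
    apply Finset.sum_congr rfl; intro s _
    rw [Finset.sum_comm]
    apply Finset.sum_congr rfl; intro s' _
    apply Finset.sum_congr rfl; intro a _
    ring

end helpers

section value

variable {S : Type} [Fintype S] [DecidableEq S] [Nonempty S] {A : Type} [Fintype A]
variable (P : S → A → S → ℝ) (p : S → A → ℝ) (rw : S → A → ℝ) (γ : ℝ)

/-- expected reward at time `t` starting from distribution `μ`. -/
noncomputable def wVal (t : ℕ) (μ : S → ℝ) : ℝ :=
  ∑ s, ∑ a, ((stepDist P p)^[t] μ) s * p s a * rw s a

lemma valueFn_eq_tsum (s0 : S) :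
    valueFn γ P rw p s0 = ∑' t : ℕ, γ ^ t * wVal P p rw t (delta s0) := rfl

lemma wVal_linear (t : ℕ) (μ : S → ℝ) :
    wVal P p rw t μ = ∑ s', μ s' * wVal P p rw t (delta s') := by
  unfold wVal
  simp_rw [iter_linear P p t μ, Finset.sum_mul, Finset.mul_sum]
  conv_rhs => rw [Finset.sum_comm]
  apply Finset.sum_congr rfl; intro s _
  rw [Finset.sum_comm]
  apply Finset.sum_congr rfl; intro s' _
  apply Finset.sum_congr rfl; intro a _
  ring

/-- a uniform bound on one-step expected rewards. -/
noncomputable def rBound : ℝ :=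
  Finset.univ.sup' Finset.univ_nonempty fun s => |∑ a, p s a * rw s a|

lemma wVal_bound (hP : ∀ s a, (∀ s', 0 ≤ P s a s') ∧ ∑ s', P s a s' = 1)
    (hp : ∀ s, (∀ a, 0 ≤ p s a) ∧ ∑ a, p s a = 1)
    {μ : S → ℝ} (h0 : ∀ s, 0 ≤ μ s) (h1 : ∑ s, μ s = 1) (t : ℕ) :
    |wVal P p rw t μ| ≤ rBound p rw := by
  have hw : wVal P p rw t μ
      = ∑ s, ((stepDist P p)^[t] μ) s * ∑ a, p s a * rw s a := by
    unfold wVal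
    simp_rw [Finset.mul_sum, mul_assoc]
  rw [hw]
  calc |∑ s, ((stepDist P p)^[t] μ) s * ∑ a, p s a * rw s a|
      ≤ ∑ s, |((stepDist P p)^[t] μ) s * ∑ a, p s a * rw s a| :=
        Finset.abs_sum_le_sum_abs _ _
    _ ≤ ∑ s, ((stepDist P p)^[t] μ) s * rBound p rw := by
        apply Finset.sum_le_sum; intro s _
        rw [abs_mul, abs_of_nonneg ((iter_prob P p hP hp h0 h1 t).1 s)]
        exact mul_le_mul_of_nonneg_left
          (Finset.le_sup' (fun s => |∑ a, p s a * rw s a|) (Finset.mem_univ s))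
          ((iter_prob P p hP hp h0 h1 t).1 s)
    _ = rBound p rw := by
        rw [← Finset.sum_mul, (iter_prob P p hP hp h0 h1 t).2, one_mul]

lemma summable_wVal (hP : ∀ s a, (∀ s', 0 ≤ P s a s') ∧ ∑ s', P s a s' = 1)
    (hp : ∀ s, (∀ a, 0 ≤ p s a) ∧ ∑ a, p s a = 1)
    (hγ0 : 0 ≤ γ) (hγ1 : γ < 1)
    {μ : S → ℝ} (h0 : ∀ s, 0 ≤ μ s) (h1 : ∑ s, μ s = 1) :
    Summable (fun t : ℕ => γ ^ t * wVal P p rw t μ) := by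
  have hg : Summable (fun t : ℕ => γ ^ t * rBound p rw) :=
    (summable_geometric_of_lt_one hγ0 hγ1).mul_right _
  have habs : Summable (fun t : ℕ => |γ ^ t * wVal P p rw t μ|) := by
    apply Summable.of_nonneg_of_le (fun t => abs_nonneg _) _ hg
    intro t
    rw [abs_mul, abs_pow, abs_of_nonneg hγ0]
    exact mul_le_mul_of_nonneg_left (wVal_bound P p rw hP hp h0 h1 t)
      (pow_nonneg hγ0 t)
  exact habs.of_abs

lemma bellman (hP : ∀ s a, (∀ s', 0 ≤ P s a s') ∧ ∑ s', P s a s' = 1)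
    (hp : ∀ s, (∀ a, 0 ≤ p s a) ∧ ∑ a, p s a = 1)
    (hγ0 : 0 ≤ γ) (hγ1 : γ < 1) (s0 : S) :
    valueFn γ P rw p s0
      = ∑ a, p s0 a * (rw s0 a + γ * ∑ s', P s0 a s' * valueFn γ P rw p s') := by
  have hs : ∀ s1 : S, Summable (fun t : ℕ => γ ^ t * wVal P p rw t (delta s1)) :=
    fun s1 => summable_wVal P p rw γ hP hp hγ0 hγ1 (delta_prob s1).1 (delta_prob s1).2
  set ν := stepDist P p (delta s0) with hν
  have hshift : ∀ t : ℕ, γ ^ (t + 1) * wVal P p rw (t + 1) (delta s0)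
      = ∑ s', ν s' * (γ * (γ ^ t * wVal P p rw t (delta s'))) := by
    intro t
    have h1 : wVal P p rw (t + 1) (delta s0) = wVal P p rw t ν := by
      unfold wVal; simp_rw [Function.iterate_succ_apply]; rfl
    rw [h1, wVal_linear P p rw t ν, Finset.mul_sum]
    apply Finset.sum_congr rfl; intro s' _; ring
  rw [valueFn_eq_tsum, Summable.tsum_eq_zero_add (hs s0)]
  simp_rw [hshift]
  rw [Summable.tsum_finsetSum (fun s' _ => (((hs s').mul_left γ).mul_left (ν s')))]
  simp_rw [tsum_mul_left]
  have hw0 : wVal P p rw 0 (delta s0) = ∑ a, p s0 a * rw s0 a := by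
    unfold wVal
    simp [delta, ite_mul, Finset.sum_ite_eq']
  have hν' : ∀ s', ν s' = ∑ a, p s0 a * P s0 a s' := by
    intro s'
    rw [hν, stepDist_apply]
    simp [delta, ite_mul, Finset.sum_ite_eq']
  have hVv : ∀ s1 : S, (∑' t : ℕ, γ ^ t * wVal P p rw t (delta s1)) = valueFn γ P rw p s1 :=
    fun _ => rfl
  simp_rw [hVv, hw0, hν']
  rw [pow_zero, one_mul]
  simp_rw [mul_add, Finset.sum_add_distrib]
  congr 1
  simp_rw [Finset.sum_mul, Finset.mul_sum]
  rw [Finset.sum_comm]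
  apply Finset.sum_congr rfl; intro a _
  apply Finset.sum_congr rfl; intro s' _
  ring

lemma valueFn_sub (hP : ∀ s a, (∀ s', 0 ≤ P s a s') ∧ ∑ s', P s a s' = 1)
    (hp : ∀ s, (∀ a, 0 ≤ p s a) ∧ ∑ a, p s a = 1)
    (hγ0 : 0 ≤ γ) (hγ1 : γ < 1) (rw1 rw2 : S → A → ℝ) (s0 : S) :
    valueFn γ P (fun s a => rw1 s a - rw2 s a) p s0
      = valueFn γ P rw1 p s0 - valueFn γ P rw2 p s0 := by
  have key : ∀ t : ℕ, γ ^ t * wVal P p (fun s a => rw1 s a - rw2 s a) t (delta s0)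
      = γ ^ t * wVal P p rw1 t (delta s0) - γ ^ t * wVal P p rw2 t (delta s0) := by
    intro t
    unfold wVal
    simp_rw [mul_sub, Finset.sum_sub_distrib]
    ring
  rw [valueFn_eq_tsum, valueFn_eq_tsum, valueFn_eq_tsum]
  simp_rw [key]
  rw [Summable.tsum_sub (summable_wVal P p rw1 γ hP hp hγ0 hγ1 (delta_prob s0).1 (delta_prob s0).2)
    (summable_wVal P p rw2 γ hP hp hγ0 hγ1 (delta_prob s0).1 (delta_prob s0).2)]

end value

section game

variable {S : Type} {n : ℕ} {Ω : Fin n → Type} [∀ i, Fintype (Ω i)]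

lemma jointPol_dist (π : ∀ j, S → Ω j → ℝ)
    (hπ : ∀ j s, (∀ x, 0 ≤ π j s x) ∧ ∑ x, π j s x = 1) (s : S) :
    (∀ a, 0 ≤ jointPol π s a) ∧ ∑ a, jointPol π s a = 1 := by
  constructor
  · intro a; exact Finset.prod_nonneg fun j _ => (hπ j s).1 (a j)
  · unfold jointPol
    rw [← Fintype.prod_sum]
    exact Finset.prod_eq_one fun j _ => (hπ j s).2

noncomputable def detPol {S : Type} {n : ℕ} {Ω : Fin n → Type} (i : Fin n) (x : Ω i) :
    S → Ω i → ℝ := by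
  classical exact fun _ y => if y = x then 1 else 0

lemma detPol_apply {S : Type} {n : ℕ} {Ω : Fin n → Type} (i : Fin n) (x : Ω i)
    [DecidableEq (Ω i)] (s : S) (y : Ω i) :
    detPol (S := S) i x s y = if y = x then 1 else 0 := by
  unfold detPol; congr

lemma detPol_dist (i : Fin n) (x : Ω i) (s : S) :
    (∀ y, 0 ≤ detPol (S := S) i x s y) ∧ ∑ y, detPol (S := S) i x s y = 1 := by
  classical
  constructor
  · intro y; rw [detPol_apply]; split <;> norm_num
  · simp [detPol_apply]

lemma prod_split (i : Fin n) (g : ∀ j, Ω j → ℝ) (y : Ω i)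
    (b : ∀ j : { j // j ≠ i }, Ω j) :
    ∏ j, g j ((Equiv.piSplitAt i Ω).symm (y, b) j)
      = g i y * ∏ j : { j // j ≠ i }, g j.1 (b j) := by
  rw [Fintype.prod_eq_mul_prod_compl i]
  congr 1
  · simp
  · rw [Finset.prod_subtype ({i}ᶜ : Finset (Fin n)) (p := fun j => j ≠ i)
      (fun j => by simp) (fun j => g j ((Equiv.piSplitAt i Ω).symm (y, b) j))]
    apply Finset.prod_congr rfl
    intro j _
    simp [Equiv.piSplitAt_symm_apply, j.2]

lemma update_symm (i : Fin n) (x y : Ω i) (b : ∀ j : { j // j ≠ i }, Ω j) :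
    Function.update ((Equiv.piSplitAt i Ω).symm (y, b)) i x
      = (Equiv.piSplitAt i Ω).symm (x, b) := by
  funext j
  rcases eq_or_ne j i with rfl | hj
  · simp [Equiv.piSplitAt_symm_apply]
  · simp [Function.update_of_ne hj, Equiv.piSplitAt_symm_apply, hj]

lemma marg (i : Fin n) (π : ∀ j, S → Ω j → ℝ) (s : S)
    (hπi : ∑ y, π i s y = 1) (x : Ω i) (f : (∀ j, Ω j) → ℝ) :
    ∑ a, jointPol π s a * f (Function.update a i x)
      = ∑ a, jointPol (Function.update π i (detPol i x)) s a * f a := by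
  classical
  have L : ∀ (ρ : ∀ j, S → Ω j → ℝ) (g : (∀ j, Ω j) → ℝ),
      ∑ a, jointPol ρ s a * g a
        = ∑ y, ∑ b, (ρ i s y * ∏ j : { j // j ≠ i }, ρ j.1 s (b j)) *
            g ((Equiv.piSplitAt i Ω).symm (y, b)) := by
    intro ρ g
    rw [← Equiv.sum_comp (Equiv.piSplitAt i Ω).symm (fun a => jointPol ρ s a * g a),
      Fintype.sum_prod_type]
    apply Finset.sum_congr rfl; intro y _
    apply Finset.sum_congr rfl; intro b _
    rw [jointPol, prod_split]
  rw [L π (fun a => f (Function.update a i x)), L (Function.update π i (detPol i x)) f]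
  simp_rw [update_symm]
  have hrhs : ∀ (y : Ω i) (b : ∀ j : { j // j ≠ i }, Ω j),
      (Function.update π i (detPol i x) i s y
          * ∏ j : { j // j ≠ i }, Function.update π i (detPol i x) j.1 s (b j))
        * f ((Equiv.piSplitAt i Ω).symm (y, b))
      = (if y = x then (1 : ℝ) else 0) *
          ((∏ j : { j // j ≠ i }, π j.1 s (b j)) *
            f ((Equiv.piSplitAt i Ω).symm (y, b))) := by
    intro y b
    rw [Function.update_self, detPol_apply]
    have hupd : ∀ j : { j // j ≠ i },
        Function.update π i (detPol i x) j.1 s (b j) = π j.1 s (b j) := by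
      intro j; rw [Function.update_of_ne j.2]
    simp_rw [hupd]
    ring
  simp_rw [hrhs, ite_mul, one_mul, zero_mul]
  conv_rhs => rw [Finset.sum_comm]
  simp_rw [Finset.sum_ite_eq' Finset.univ x]
  simp only [Finset.mem_univ, if_true]
  have hpull : ∀ y : Ω i,
      ∑ b : ∀ j : { j // j ≠ i }, Ω j,
          (π i s y * ∏ j : { j // j ≠ i }, π j.1 s (b j)) *
            f ((Equiv.piSplitAt i Ω).symm (x, b))
        = π i s y * ∑ b : ∀ j : { j // j ≠ i }, Ω j,
            (∏ j : { j // j ≠ i }, π j.1 s (b j)) *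
              f ((Equiv.piSplitAt i Ω).symm (x, b)) := by
    intro y
    rw [Finset.mul_sum]
    apply Finset.sum_congr rfl; intro b _; ring
  rw [Finset.sum_congr rfl fun y _ => hpull y, ← Finset.sum_mul, hπi, one_mul]

end game

/-- Vanishing advantage of the non-potential part in Markov potential games: for
`h_i = r_i − φ`, the marginalized advantage `Ā_{h_i}^π(s, ·)` has the same expectation
under every local policy, i.e. `∑_{a_i} (π'_i(a_i|s) − π_i(a_i|s))·Ā_{h_i}^π(s, a_i) = 0`
for every state `s`, agent `i` and distributions `π'_i, π_i` on `Ω i`. -/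
theorem mpg_nonpotential_advantage_vanishes
    (S : Type) [Fintype S] [DecidableEq S] [Nonempty S]
    (n : ℕ) (Ω : Fin n → Type) [∀ i, Fintype (Ω i)] [∀ i, Nonempty (Ω i)]
    (P : S → (∀ i, Ω i) → S → ℝ)
    (hP : ∀ s a, (∀ s', 0 ≤ P s a s') ∧ ∑ s', P s a s' = 1)
    (γ : ℝ) (hγ : 0 < γ) (hγ1 : γ < 1)
    (r : Fin n → S → (∀ i, Ω i) → ℝ) (φ : S → (∀ i, Ω i) → ℝ)
    (hMPG : ∀ i : Fin n, ∀ πA πB : ∀ j, S → Ω j → ℝ,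
      (∀ j s, (∀ x, 0 ≤ πA j s x) ∧ ∑ x, πA j s x = 1) →
      (∀ j s, (∀ x, 0 ≤ πB j s x) ∧ ∑ x, πB j s x = 1) →
      (∀ j, j ≠ i → πA j = πB j) →
      ∀ s, valueFn γ P (r i) (jointPol πA) s - valueFn γ P (r i) (jointPol πB) s =
        valueFn γ P φ (jointPol πA) s - valueFn γ P φ (jointPol πB) s) :
    ∀ π : ∀ j, S → Ω j → ℝ,
      (∀ j s, (∀ x, 0 ≤ π j s x) ∧ ∑ x, π j s x = 1) →
      ∀ (i : Fin n) (s : S) (q q' : Ω i → ℝ),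
        (∀ x, 0 ≤ q x) → (∑ x, q x = 1) →
        (∀ x, 0 ≤ q' x) → (∑ x, q' x = 1) →
        ∑ x, (q' x - q x) *
          (∑ a : ∀ j, Ω j, jointPol π s a *
            (qFn γ P (fun s a => r i s a - φ s a) (jointPol π) s (Function.update a i x) -
              valueFn γ P (fun s a => r i s a - φ s a) (jointPol π) s)) = 0 := by
  intro π hπ i s q q' hq0 hq1 hq'0 hq'1
  have hjp : ∀ s1 : S, (∀ a, 0 ≤ jointPol π s1 a) ∧ ∑ a, jointPol π s1 a = 1 :=
    fun s1 => jointPol_dist π hπ s1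
  have key : ∀ x : Ω i,
      (∑ a : ∀ j, Ω j, jointPol π s a *
        (qFn γ P (fun s a => r i s a - φ s a) (jointPol π) s (Function.update a i x) -
          valueFn γ P (fun s a => r i s a - φ s a) (jointPol π) s)) = 0 := by
    intro x
    have hπ' : ∀ j s1, (∀ y, 0 ≤ Function.update π i (detPol i x) j s1 y) ∧
        ∑ y, Function.update π i (detPol i x) j s1 y = 1 := by
      intro j s1
      rcases eq_or_ne j i with rfl | hj
      · simp only [Function.update_self]; exact detPol_dist j x s1
      · rw [Function.update_of_ne hj]; exact hπ j s1
    have hjp' : ∀ s1 : S, (∀ a, 0 ≤ jointPol (Function.update π i (detPol i x)) s1 a) ∧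
        ∑ a, jointPol (Function.update π i (detPol i x)) s1 a = 1 :=
      fun s1 => jointPol_dist _ hπ' s1
    have hVeq : ∀ s1, valueFn γ P (fun s a => r i s a - φ s a)
          (jointPol (Function.update π i (detPol i x))) s1
        = valueFn γ P (fun s a => r i s a - φ s a) (jointPol π) s1 := by
      intro s1
      have hm := hMPG i (Function.update π i (detPol i x)) π hπ' hπ
        (fun j hj => Function.update_of_ne hj _ _) s1
      rw [valueFn_sub P (jointPol (Function.update π i (detPol i x))) γ hP (hjp')
          hγ.le hγ1 (r i) φ s1,
        valueFn_sub P (jointPol π) γ hP hjp hγ.le hγ1 (r i) φ s1]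
      linarith
    have hB := bellman P (jointPol (Function.update π i (detPol i x)))
      (fun s a => r i s a - φ s a) γ hP hjp' hγ.le hγ1 s
    simp_rw [hVeq] at hB
    have hqdef : ∀ a : ∀ j, Ω j,
        qFn γ P (fun s a => r i s a - φ s a) (jointPol π) s a
          = (r i s a - φ s a)
            + γ * ∑ s', P s a s' * valueFn γ P (fun s a => r i s a - φ s a) (jointPol π) s' :=
      fun a => rfl
    have expand : (∑ a : ∀ j, Ω j, jointPol π s a *
        (qFn γ P (fun s a => r i s a - φ s a) (jointPol π) s (Function.update a i x) -
          valueFn γ P (fun s a => r i s a - φ s a) (jointPol π) s))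
      = (∑ a : ∀ j, Ω j, jointPol π s a *
          qFn γ P (fun s a => r i s a - φ s a) (jointPol π) s (Function.update a i x))
        - valueFn γ P (fun s a => r i s a - φ s a) (jointPol π) s := by
      simp_rw [mul_sub, Finset.sum_sub_distrib, ← Finset.sum_mul, (hjp s).2, one_mul]
    rw [expand]
    have hmarg := marg i π s (hπ i s).2 x
      (fun a => (r i s a - φ s a)
        + γ * ∑ s', P s a s' * valueFn γ P (fun s a => r i s a - φ s a) (jointPol π) s')
    simp_rw [hqdef]
    rw [hmarg, ← hB]
    ring
  simp_rw [key, mul_zero]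
  exact Finset.sum_const_zero
end
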